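/- Let G be a semi-Markovian causal graph with observed variables V, let 𝔸 be a finite collection of subsets of V, let X and Y be disjoint subsets of V, and let (Y₁, Y₂) be a directed edge of G with Y₁, Y₂ ∈ Y. Let G′ be the graph obtained from G by removing the edge (Y₁, Y₂). If the causal effect of X on Y is not g-identifiable from (𝔸, G′), then the causal effect of X on Y ∖ {Y₁} is not g-identifiable from (𝔸, G). -/

import Mathlib

open scoped Classical

/-- A semi-Markovian causal graph: a DAG over a finite vertex set partitioned into
observed (`obs`) and unobserved (`unobs`) variables, where every unobserved variable
has no parents and exactly two (distinct, observed) children. -/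
structure CausalGraph (ν : Type) [Fintype ν] [DecidableEq ν] where
  obs : Finset ν
  unobs : Finset ν
  disj : Disjoint obs unobs
  E : ν → ν → Prop
  edge_mem : ∀ x y, E x y → x ∈ obs ∪ unobs ∧ y ∈ obs ∪ unobs
  acyclic : ∀ x, ¬ Relation.TransGen E x x
  unobs_no_parent : ∀ u ∈ unobs, ∀ w, ¬ E w u
  unobs_two_children : ∀ u ∈ unobs,
    ∃ a b, a ≠ b ∧ a ∈ obs ∧ b ∈ obs ∧ (∀ w, E u w ↔ w = a ∨ w = b)

namespace CausalGraph

variable {ν : Type} [Fintype ν] [DecidableEq ν]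

def verts (G : CausalGraph ν) : Finset ν := G.obs ∪ G.unobs

/-- A structural equation model over the causal graph `G`: finite nonempty domains
(encoded as finite sets of naturals), a pmf for each unobserved variable, and a
conditional pmf (given an assignment to the parents) for each observed variable. -/
structure SEM (G : CausalGraph ν) where
  dom : ν → Finset ℕ
  dom_ne : ∀ x, (dom x).Nonempty
  pU : ν → ℕ → ℝ
  pU_nonneg : ∀ u n, 0 ≤ pU u n
  pU_sum : ∀ u ∈ G.unobs, ∑ n ∈ dom u, pU u n = 1
  pO : ν → ℕ → (ν → ℕ) → ℝ
  pO_nonneg : ∀ x n pa, 0 ≤ pO x n pa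
  pO_sum : ∀ x ∈ G.obs, ∀ pa : ν → ℕ, ∑ n ∈ dom x, pO x n pa = 1
  pO_par : ∀ x n (pa pa' : ν → ℕ), (∀ p, G.E p x → pa p = pa' p) → pO x n pa = pO x n pa'

namespace SEM

variable {G : CausalGraph ν}

/-- Full assignments: all variables of `G` get values in their domains
(non-vertices are pinned to `0`). -/
noncomputable def fullAssign (M : SEM G) : Finset (ν → ℕ) :=
  Fintype.piFinset (fun x => if x ∈ G.verts then M.dom x else {0})

/-- Observed assignments `dom(V)`: observed variables get values in their domains
(all other coordinates are pinned to `0`). -/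
noncomputable def obsAssign (M : SEM G) : Finset (ν → ℕ) :=
  Fintype.piFinset (fun x => if x ∈ G.obs then M.dom x else {0})

/-- `Q^M[S](v) = Σ_u Π_{X ∈ S} P(x | pa_G(X)) Π_{U} P(u)`. -/
noncomputable def Q (M : SEM G) (S : Finset ν) (v : ν → ℕ) : ℝ :=
  ∑ w ∈ M.fullAssign.filter (fun w => ∀ x ∈ G.obs, w x = v x),
    (∏ x ∈ S, M.pO x (w x) w) * ∏ u ∈ G.unobs, M.pU u (w u)

/-- The observational distribution `P^M(v) = Q^M[V](v)`. -/
noncomputable def P (M : SEM G) (v : ν → ℕ) : ℝ := M.Q G.obs v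

/-- Post-interventional probability `P^M_x(y)`: sum of `Q^M[V∖X]` over all observed
realizations consistent with `x` on `X` and `y` on `Y`. -/
noncomputable def Px (M : SEM G) (X : Finset ν) (x : ν → ℕ) (Y : Finset ν) (y : ν → ℕ) : ℝ :=
  ∑ v ∈ M.obsAssign.filter (fun v => (∀ i ∈ X, v i = x i) ∧ (∀ i ∈ Y, v i = y i)),
    M.Q (G.obs \ X) v

/-- `M ∈ 𝕄⁺(G)`: strictly positive observational distribution. -/
def positive (M : SEM G) : Prop := ∀ v ∈ M.obsAssign, 0 < M.P v

end SEM

/-- The causal effect of `X` on `Y` is identifiable from `G`. -/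
def Identifiable (G : CausalGraph ν) (X Y : Finset ν) : Prop :=
  ∀ M₁ M₂ : SEM G, M₁.positive → M₂.positive →
    (∀ i ∈ G.obs, M₁.dom i = M₂.dom i) →
    (∀ v ∈ M₁.obsAssign, M₁.P v = M₂.P v) →
    ∀ x y : ν → ℕ, (∀ i ∈ X, x i ∈ M₁.dom i) → (∀ i ∈ Y, y i ∈ M₁.dom i) →
      M₁.Px X x Y y = M₂.Px X x Y y

/-- `Q[S]` is identifiable from `G`. -/
def QIdentifiable (G : CausalGraph ν) (S : Finset ν) : Prop :=
  Identifiable G (G.obs \ S) S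

/-- The causal effect of `X` on `Y` is g-identifiable from `(𝔸, G)`. -/
def GIdentifiable (G : CausalGraph ν) (𝔸 : Finset (Finset ν)) (X Y : Finset ν) : Prop :=
  ∀ M₁ M₂ : SEM G, M₁.positive → M₂.positive →
    (∀ i ∈ G.obs, M₁.dom i = M₂.dom i) →
    (∀ A ∈ 𝔸, ∀ v ∈ M₁.obsAssign, M₁.Q A v = M₂.Q A v) →
    ∀ x y : ν → ℕ, (∀ i ∈ X, x i ∈ M₁.dom i) → (∀ i ∈ Y, y i ∈ M₁.dom i) →
      M₁.Px X x Y y = M₂.Px X x Y y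

/-- `Q[S]` is g-identifiable from `(𝔸, G)`. -/
def QGIdentifiable (G : CausalGraph ν) (𝔸 : Finset (Finset ν)) (S : Finset ν) : Prop :=
  GIdentifiable G 𝔸 (G.obs \ S) S

/-- Bidirected edge of `G_X` between `a` and `b`: distinct members of `X` sharing an
unobserved parent (whose two children then necessarily both lie in `X`). -/
def biEdge (G : CausalGraph ν) (X : Finset ν) (a b : ν) : Prop :=
  a ≠ b ∧ a ∈ X ∧ b ∈ X ∧ ∃ u ∈ G.unobs, G.E u a ∧ G.E u b

/-- `X` is a single c-component of `G`. -/
def SingleC (G : CausalGraph ν) (X : Finset ν) : Prop :=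
  X.Nonempty ∧ ∀ a ∈ X, ∀ b ∈ X, Relation.ReflTransGen (G.biEdge X) a b

/-- The c-components of `S`: connected components of the bidirected part of `G_S`. -/
noncomputable def cComponents (G : CausalGraph ν) (S : Finset ν) : Finset (Finset ν) :=
  S.image (fun a => S.filter (fun b => Relation.ReflTransGen (G.biEdge S) a b))

/-- Directed edge of `G_X` (both endpoints in `X`). -/
def dirEdgeIn (G : CausalGraph ν) (X : Finset ν) (a b : ν) : Prop :=
  a ∈ X ∧ b ∈ X ∧ G.E a b

/-- `Anc_Y(G_X)`: members of `X` having a directed path in `G_X` to some member of `Y`. -/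
noncomputable def ancIn (G : CausalGraph ν) (X Y : Finset ν) : Finset ν :=
  X.filter (fun a => ∃ y ∈ Y, Relation.ReflTransGen (G.dirEdgeIn X) a y)

/-- Unobserved vertices of the induced subgraph `G[A]`: unobserved vertices of `G`
both of whose children lie in `A`. -/
noncomputable def inducedUnobs (G : CausalGraph ν) (A : Finset ν) : Finset ν :=
  G.unobs.filter (fun u => ∀ w, G.E u w → w ∈ A)

/-- The induced subgraph `G[A]`. -/
noncomputable def induced (G : CausalGraph ν) (A : Finset ν) : CausalGraph ν where
  obs := A ∩ G.obs
  unobs := G.inducedUnobs A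
  disj := G.disj.mono Finset.inter_subset_right (Finset.filter_subset _ _)
  E x y := G.E x y ∧ x ∈ (A ∩ G.obs) ∪ G.inducedUnobs A ∧ y ∈ (A ∩ G.obs) ∪ G.inducedUnobs A
  edge_mem := fun x y h => ⟨h.2.1, h.2.2⟩
  acyclic := fun x h => G.acyclic x (by
    have key : ∀ a b, Relation.TransGen
        (fun x y => G.E x y ∧ x ∈ (A ∩ G.obs) ∪ G.inducedUnobs A ∧
          y ∈ (A ∩ G.obs) ∪ G.inducedUnobs A) a b → Relation.TransGen G.E a b := by
      intro a b h'
      induction h' with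
      | single hab => exact Relation.TransGen.single hab.1
      | tail _ hab ih => exact Relation.TransGen.tail ih hab.1
    exact key x x h)
  unobs_no_parent := fun u hu w hw =>
    G.unobs_no_parent u (Finset.mem_filter.mp hu).1 w hw.1
  unobs_two_children := by
    intro u hu
    have hu' := Finset.mem_filter.mp hu
    obtain ⟨a, b, hab, ha, hb, hiff⟩ := G.unobs_two_children u hu'.1
    have hEa : G.E u a := (hiff a).mpr (Or.inl rfl)
    have hEb : G.E u b := (hiff b).mpr (Or.inr rfl)
    have haA : a ∈ A := hu'.2 a hEa
    have hbA : b ∈ A := hu'.2 b hEb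
    refine ⟨a, b, hab, Finset.mem_inter.mpr ⟨haA, ha⟩, Finset.mem_inter.mpr ⟨hbA, hb⟩, ?_⟩
    intro w
    constructor
    · intro hw; exact (hiff w).mp hw.1
    · rintro (rfl | rfl)
      · exact ⟨hEa, Finset.mem_union.mpr (Or.inr hu),
          Finset.mem_union.mpr (Or.inl (Finset.mem_inter.mpr ⟨haA, ha⟩))⟩
      · exact ⟨hEb, Finset.mem_union.mpr (Or.inr hu),
          Finset.mem_union.mpr (Or.inl (Finset.mem_inter.mpr ⟨hbA, hb⟩))⟩

/-- `H` is a subgraph of `G`. -/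
def IsSubgraph (H G : CausalGraph ν) : Prop :=
  H.obs ⊆ G.obs ∧ H.unobs ⊆ G.unobs ∧ ∀ a b, H.E a b → G.E a b

/-- `H` is an `R`-rooted c-forest: `R` is the root set of `H`, the observed vertex set of
`H` is a single c-component, and every observed vertex has at most one child in `H`. -/
def IsCForest (H : CausalGraph ν) (R : Finset ν) : Prop :=
  H.obs.filter (fun x => ∀ w, ¬ H.E x w) = R ∧
  H.SingleC H.obs ∧
  ∀ x ∈ H.obs, ∀ w w', H.E x w → H.E x w' → w = w'

end CausalGraph

/-!
Take two positive models of `G'` that agree on every `Q[A]`, `A ∈ 𝔸`, but disagree on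
`P_x(y)`. Put the edge `Y₁ → Y₂` back by letting `Y₂` additionally emit a noisy copy `C` of
`Y₁`: with probability `1/2` it equals `Y₁`, otherwise it is uniform on `dom(Y₁)`. Every
`Q[A]` of the new models of `G` is the old one times the common kernel of `C`, so they remain
positive and still agree on `𝔸`. Writing `P'` for an old model and `P` for its extension,
`P_x(Y ∖ {Y₁} = y, C = c) = ½ P'_x(Y = y[Y₁ ↦ c]) + P'_x(Y ∖ {Y₁} = y) / (2 |dom Y₁|)`,
so if the effect on `Y ∖ {Y₁}` were g-identifiable in `G`, summing over `c` would make the old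
models agree on `P_x(Y ∖ {Y₁} = y)` and then on `P_x(y)`.
-/

open Finset Function

-- For a parent value `a ∉ D` the kernel is plain uniform, so that it sums to one for every `a`.
noncomputable def noisyCopy (D : Finset ℕ) (c a : ℕ) : ℝ :=
  if a ∈ D then (if c = a then 1 / 2 else 0) + 1 / (2 * #D) else 1 / #D

lemma noisyCopy_pos {D : Finset ℕ} (hD : D.Nonempty) (c a : ℕ) : 0 < noisyCopy D c a := by
  have : (0 : ℝ) < #D := by exact_mod_cast hD.card_pos
  unfold noisyCopy
  split_ifs <;> positivity

lemma sum_noisyCopy {D : Finset ℕ} (hD : D.Nonempty) (a : ℕ) :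
    ∑ c ∈ D, noisyCopy D c a = 1 := by
  have : (#D : ℝ) ≠ 0 := by exact_mod_cast hD.card_pos.ne'
  by_cases ha : a ∈ D
  · simp only [noisyCopy, if_pos ha, sum_add_distrib, sum_ite_eq', sum_const, nsmul_eq_mul]
    field_simp
    ring
  · simp only [noisyCopy, if_neg ha, sum_const, nsmul_eq_mul]
    field_simp

lemma noisyCopy_of_mem {D : Finset ℕ} {a : ℕ} (ha : a ∈ D) (c : ℕ) :
    noisyCopy D c a = (if a = c then 1 / 2 else 0) + 1 / (2 * #D) := by
  simp only [noisyCopy, if_pos ha, eq_comm]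

lemma forall_mem_eq_update_iff {ν β : Type*} [DecidableEq ν] {Y : Finset ν} {a : ν}
    (haY : a ∈ Y) (v y : ν → β) (c : β) :
    (∀ i ∈ Y, v i = update y a c i) ↔ (∀ i ∈ Y.erase a, v i = y i) ∧ v a = c := by
  conv_lhs => rw [← insert_erase haY, forall_mem_insert, update_self]
  rw [and_comm]
  refine and_congr_left' (forall₂_congr fun i hi => ?_)
  rw [update_of_ne (ne_of_mem_erase hi)]

lemma eq_of_forall_half_add_mean_eq {α : Type*} {D : Finset α} (hD : D.Nonempty)
    {f g : α → ℝ} {s t : ℝ} (hf : ∑ c ∈ D, f c = s) (hg : ∑ c ∈ D, g c = t)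
    (h : ∀ c ∈ D, f c / 2 + s / (2 * #D) = g c / 2 + t / (2 * #D)) :
    ∀ c ∈ D, f c = g c := by
  have hcard : (#D : ℝ) ≠ 0 := by exact_mod_cast hD.card_pos.ne'
  have hst : s = t := by
    have hsum := sum_congr rfl h
    simp only [sum_add_distrib, ← sum_div, hf, hg, sum_const, nsmul_eq_mul] at hsum
    field_simp at hsum
    linarith
  intro c hc
  have := h c hc
  rw [hst] at this
  linarith

namespace CausalGraph.SEM

variable {ν : Type} [Fintype ν] [DecidableEq ν] {H : CausalGraph ν} (M : SEM H)

noncomputable def agreeing (X : Finset ν) (x : ν → ℕ) (Y : Finset ν) (y : ν → ℕ) :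
    Finset (ν → ℕ) :=
  M.obsAssign.filter (fun v => (∀ i ∈ X, v i = x i) ∧ (∀ i ∈ Y, v i = y i))

lemma Px_eq_sum_agreeing (X : Finset ν) (x : ν → ℕ) (Y : Finset ν) (y : ν → ℕ) :
    M.Px X x Y y = ∑ v ∈ M.agreeing X x Y y, M.Q (H.obs \ X) v := rfl

lemma mem_dom_of_mem_obsAssign {v : ν → ℕ} (hv : v ∈ M.obsAssign) {i : ν}
    (hi : i ∈ H.obs) : v i ∈ M.dom i := by
  simpa [hi] using Fintype.mem_piFinset.1 hv i

variable {X Y : Finset ν} {a : ν} (x y : ν → ℕ)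

lemma agreeing_update (haY : a ∈ Y) (c : ℕ) :
    M.agreeing X x Y (update y a c) = (M.agreeing X x (Y.erase a) y).filter (· a = c) := by
  ext v
  simp only [agreeing, mem_filter, forall_mem_eq_update_iff haY, and_assoc]

lemma sum_Px_update (haY : a ∈ Y) (ha : a ∈ H.obs) :
    ∑ c ∈ M.dom a, M.Px X x Y (update y a c) = M.Px X x (Y.erase a) y := by
  simp only [Px_eq_sum_agreeing, M.agreeing_update x y haY]
  exact sum_fiberwise_of_maps_to
    (fun v hv => M.mem_dom_of_mem_obsAssign (mem_filter.1 hv).1 ha) _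

lemma sum_Q_mul_noisyCopy (haY : a ∈ Y) (ha : a ∈ H.obs) (c : ℕ) :
    ∑ v ∈ M.agreeing X x (Y.erase a) y, M.Q (H.obs \ X) v * noisyCopy (M.dom a) c (v a) =
      M.Px X x Y (update y a c) / 2 + M.Px X x (Y.erase a) y / (2 * #(M.dom a)) := by
  rw [Px_eq_sum_agreeing, Px_eq_sum_agreeing, agreeing_update M x y haY, sum_filter, sum_div,
    sum_div, ← sum_add_distrib]
  refine sum_congr rfl fun v hv => ?_
  rw [noisyCopy_of_mem (M.mem_dom_of_mem_obsAssign (mem_filter.1 hv).1 ha)]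
  split_ifs <;> ring

end CausalGraph.SEM

namespace CausalGraph

section unpairAt

variable {ν : Type*} [DecidableEq ν]

def unpairAt (b : ν) (w : ν → ℕ) : ν → ℕ := update w b (w b).unpair.1

@[simp]
lemma unpairAt_update (b : ν) (w : ν → ℕ) (n : ℕ) :
    unpairAt b (update w b n) = update w b n.unpair.1 := by
  simp [unpairAt]

lemma unpairAt_of_ne {b i : ν} (h : i ≠ b) (w : ν → ℕ) : unpairAt b w i = w i :=
  update_of_ne h _ _

lemma unpairAt_congr (b : ν) {w w' : ν → ℕ} {p : ν} (h : w p = w' p) :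
    unpairAt b w p = unpairAt b w' p := by
  by_cases hp : p = b
  · subst hp; simp [unpairAt, h]
  · rw [unpairAt_of_ne hp, unpairAt_of_ne hp, h]

end unpairAt

variable {ν : Type} [Fintype ν] [DecidableEq ν]

structure IsEdgeDeletion (G' G : CausalGraph ν) (a b : ν) : Prop where
  obs_eq : G'.obs = G.obs
  unobs_eq : G'.unobs = G.unobs
  E_iff : ∀ x y, G'.E x y ↔ G.E x y ∧ ¬(x = a ∧ y = b)
  E_deleted : G.E a b

namespace IsEdgeDeletion

variable {G G' : CausalGraph ν} {a b : ν}

lemma verts_eq (hd : G'.IsEdgeDeletion G a b) : G'.verts = G.verts := by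
  rw [verts, verts, hd.obs_eq, hd.unobs_eq]

lemma E_of_E' (hd : G'.IsEdgeDeletion G a b) {x y : ν} (h : G'.E x y) : G.E x y :=
  ((hd.E_iff x y).1 h).1

lemma ne (hd : G'.IsEdgeDeletion G a b) : a ≠ b := by
  rintro rfl
  exact G.acyclic a (.single hd.E_deleted)

lemma target_notMem_unobs (hd : G'.IsEdgeDeletion G a b) : b ∉ G.unobs :=
  fun h => G.unobs_no_parent b h a hd.E_deleted

lemma target_mem_obs (hd : G'.IsEdgeDeletion G a b) : b ∈ G.obs := by
  have := (G.edge_mem a b hd.E_deleted).2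
  rw [mem_union] at this
  exact this.resolve_right hd.target_notMem_unobs

end IsEdgeDeletion

namespace SEM

variable {G G' : CausalGraph ν} {a b : ν} (hd : G'.IsEdgeDeletion G a b) (M : SEM G')

/-- `b` takes the values `Nat.pair m c`, where `m` is its value under `M` and `c` is a noisy copy
of its restored parent `a`; `unpairAt b` recovers the assignment of `M`. -/
noncomputable def addNoisyCopy : SEM G where
  dom x := if x = b then (M.dom b ×ˢ M.dom a).map Nat.pairEquiv.toEmbedding else M.dom x
  dom_ne x := by
    split_ifs
    exacts [((M.dom_ne b).product (M.dom_ne a)).map, M.dom_ne x]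
  pU := M.pU
  pU_nonneg := M.pU_nonneg
  pU_sum u hu := by
    rw [if_neg (ne_of_mem_of_not_mem hu hd.target_notMem_unobs)]
    exact M.pU_sum u (hd.unobs_eq ▸ hu)
  pO x n pa := if x = b then
      M.pO b n.unpair.1 (unpairAt b pa) * noisyCopy (M.dom a) n.unpair.2 (pa a)
    else M.pO x n (unpairAt b pa)
  pO_nonneg x n pa := by
    split_ifs
    exacts [mul_nonneg (M.pO_nonneg _ _ _) (noisyCopy_pos (M.dom_ne a) _ _).le,
      M.pO_nonneg _ _ _]
  pO_sum x hx pa := by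
    split_ifs with hxb
    · subst hxb
      simp only [sum_map, sum_product, Equiv.coe_toEmbedding, Nat.pairEquiv_apply,
        uncurry_apply_pair, Nat.unpair_pair, ← mul_sum, sum_noisyCopy (M.dom_ne a), mul_one]
      exact M.pO_sum x (hd.obs_eq ▸ hx) _
    · exact M.pO_sum x (hd.obs_eq ▸ hx) _
  pO_par x n pa pa' h := by
    have hpar : ∀ p, G'.E p x → unpairAt b pa p = unpairAt b pa' p :=
      fun p hp => unpairAt_congr b (h p (hd.E_of_E' hp))
    split_ifs with hxb
    · subst hxb
      rw [M.pO_par _ _ _ _ hpar, h a hd.E_deleted]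
    · exact M.pO_par _ _ _ _ hpar

lemma addNoisyCopy_dom_of_ne {i : ν} (hi : i ≠ b) : (M.addNoisyCopy hd).dom i = M.dom i :=
  if_neg hi

lemma pair_mem_addNoisyCopy_dom {m n : ℕ} (hm : m ∈ M.dom b) (hn : n ∈ M.dom a) :
    Nat.pair m n ∈ (M.addNoisyCopy hd).dom b := by
  simp only [addNoisyCopy, if_pos, mem_map_equiv, Nat.pairEquiv_symm_apply, Nat.unpair_pair,
    mem_product]
  exact ⟨hm, hn⟩

lemma prod_pO_addNoisyCopy (S : Finset ν) (w : ν → ℕ) :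
    ∏ x ∈ S, (M.addNoisyCopy hd).pO x (w x) w =
      (∏ x ∈ S, M.pO x (unpairAt b w x) (unpairAt b w)) *
        if b ∈ S then noisyCopy (M.dom a) (w b).unpair.2 (w a) else 1 := by
  rw [← prod_ite_eq' S b fun _ => noisyCopy (M.dom a) (w b).unpair.2 (w a), ← prod_mul_distrib]
  refine prod_congr rfl fun x _ => ?_
  by_cases hx : x = b
  · subst hx; simp [addNoisyCopy, unpairAt]
  · simp [addNoisyCopy, hx, unpairAt_of_ne hx]

lemma mem_piFinset_addNoisyCopy_iff {s : Finset ν} (hb : b ∈ s) {w : ν → ℕ} :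
    w ∈ Fintype.piFinset (fun x => if x ∈ s then (M.addNoisyCopy hd).dom x else {0}) ↔
      (w b).unpair.2 ∈ M.dom a ∧
        unpairAt b w ∈ Fintype.piFinset (fun x => if x ∈ s then M.dom x else {0}) := by
  conv_lhs => rw [← update_eq_self b w]
  simp only [unpairAt, Fintype.mem_piFinset, forall_update_iff, if_pos hb]
  have hrest : (∀ x ≠ b, w x ∈ if x ∈ s then (M.addNoisyCopy hd).dom x else {0}) ↔
      ∀ x ≠ b, w x ∈ if x ∈ s then M.dom x else {0} :=
    forall₂_congr fun x hx => by rw [addNoisyCopy_dom_of_ne hd M hx]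
  rw [hrest, ← and_assoc]
  refine and_congr_left' ?_
  simp [addNoisyCopy, mem_map_equiv, and_comm]

lemma mem_fullAssign_addNoisyCopy_iff {w : ν → ℕ} :
    w ∈ (M.addNoisyCopy hd).fullAssign ↔
      (w b).unpair.2 ∈ M.dom a ∧ unpairAt b w ∈ M.fullAssign := by
  rw [fullAssign, fullAssign, hd.verts_eq]
  exact M.mem_piFinset_addNoisyCopy_iff hd (mem_union_left _ hd.target_mem_obs)

lemma mem_obsAssign_addNoisyCopy_iff {w : ν → ℕ} :
    w ∈ (M.addNoisyCopy hd).obsAssign ↔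
      (w b).unpair.2 ∈ M.dom a ∧ unpairAt b w ∈ M.obsAssign := by
  rw [obsAssign, obsAssign, hd.obs_eq]
  exact M.mem_piFinset_addNoisyCopy_iff hd hd.target_mem_obs

lemma Q_addNoisyCopy (ha : a ∈ G.obs) (S : Finset ν) {v : ν → ℕ}
    (hv : (v b).unpair.2 ∈ M.dom a) :
    (M.addNoisyCopy hd).Q S v =
      M.Q S (unpairAt b v) * if b ∈ S then noisyCopy (M.dom a) (v b).unpair.2 (v a) else 1 := by
  have hb := hd.target_mem_obs
  rw [Q, Q, sum_mul, hd.obs_eq]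
  refine sum_nbij' (unpairAt b) (update · b (v b)) ?_ ?_ ?_ ?_ ?_
  · intro w hw
    obtain ⟨hw, hwv⟩ := mem_filter.1 hw
    refine mem_filter.2 ⟨((M.mem_fullAssign_addNoisyCopy_iff hd).1 hw).2, fun x hx => ?_⟩
    exact unpairAt_congr b (hwv x hx)
  · intro w hw
    obtain ⟨hw, hwv⟩ := mem_filter.1 hw
    have hwb : w b = (v b).unpair.1 := by simpa [unpairAt] using hwv b hb
    refine mem_filter.2
      ⟨(M.mem_fullAssign_addNoisyCopy_iff hd).2 ⟨by simpa, ?_⟩, fun x hx => ?_⟩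
    · simpa [← hwb] using hw
    · by_cases hxb : x = b
      · subst hxb; simp
      · simpa [hxb, unpairAt_of_ne hxb] using hwv x hx
  · intro w hw
    have hwb := (mem_filter.1 hw).2 b hb
    simp [unpairAt, ← hwb]
  · intro w hw
    have hwb : w b = (v b).unpair.1 := by simpa [unpairAt] using (mem_filter.1 hw).2 b hb
    simp [← hwb]
  · intro w hw
    have hwv := (mem_filter.1 hw).2
    have hpU : ∏ u ∈ G.unobs, (M.addNoisyCopy hd).pU u (w u) =
        ∏ u ∈ G'.unobs, M.pU u (unpairAt b w u) := by
      rw [hd.unobs_eq]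
      exact prod_congr rfl fun u hu => by
        rw [unpairAt_of_ne (ne_of_mem_of_not_mem hu hd.target_notMem_unobs)]; rfl
    rw [prod_pO_addNoisyCopy, hpU, hwv b hb, hwv a ha, mul_right_comm]

lemma positive_addNoisyCopy (ha : a ∈ G.obs) (hM : M.positive) :
    (M.addNoisyCopy hd).positive := by
  intro v hv
  obtain ⟨hv2, hv'⟩ := (M.mem_obsAssign_addNoisyCopy_iff hd).1 hv
  have hP := hM _ hv'
  rw [P, hd.obs_eq] at hP
  rw [P, Q_addNoisyCopy hd M ha _ hv2, if_pos hd.target_mem_obs]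
  exact mul_pos hP (noisyCopy_pos (M.dom_ne a) _ _)

variable {hd} in
lemma Q_addNoisyCopy_eq_of_Q_eq (ha : a ∈ G.obs) {M₁ M₂ : SEM G'}
    (hdom : ∀ i ∈ G'.obs, M₁.dom i = M₂.dom i) {A : Finset ν}
    (hQ : ∀ v ∈ M₁.obsAssign, M₁.Q A v = M₂.Q A v) :
    ∀ v ∈ (M₁.addNoisyCopy hd).obsAssign,
      (M₁.addNoisyCopy hd).Q A v = (M₂.addNoisyCopy hd).Q A v := by
  intro v hv
  have hda : M₁.dom a = M₂.dom a := hdom a (hd.obs_eq ▸ ha)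
  obtain ⟨hv2, hv'⟩ := (M₁.mem_obsAssign_addNoisyCopy_iff hd).1 hv
  rw [Q_addNoisyCopy hd M₁ ha _ hv2, Q_addNoisyCopy hd M₂ ha _ (hda ▸ hv2), hQ _ hv', hda]

variable {hd} in
lemma addNoisyCopy_dom_eq (ha : a ∈ G.obs) {M₁ M₂ : SEM G'}
    (hdom : ∀ i ∈ G'.obs, M₁.dom i = M₂.dom i) :
    ∀ i ∈ G.obs, (M₁.addNoisyCopy hd).dom i = (M₂.addNoisyCopy hd).dom i := by
  rw [← hd.obs_eq] at ha ⊢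
  intro i hi
  simp only [addNoisyCopy, hdom i hi, hdom a ha, hdom b (hd.obs_eq ▸ hd.target_mem_obs)]

lemma Px_addNoisyCopy (ha : a ∈ G.obs) {X Y : Finset ν} (haY : a ∈ Y) (hbY : b ∈ Y)
    (hbX : b ∉ X) (x y : ν → ℕ) {c : ℕ} (hc : c ∈ M.dom a) :
    (M.addNoisyCopy hd).Px X x (Y.erase a) (update y b (Nat.pair (y b) c)) =
      M.Px X x Y (update y a c) / 2 + M.Px X x (Y.erase a) y / (2 * #(M.dom a)) := by
  have hbY' : b ∈ Y.erase a := mem_erase.2 ⟨hd.ne.symm, hbY⟩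
  have hpair : ∀ v ∈ (M.addNoisyCopy hd).agreeing X x (Y.erase a)
      (update y b (Nat.pair (y b) c)), v b = Nat.pair (y b) c :=
    fun v hv => by simpa using (mem_filter.1 hv).2.2 b hbY'
  rw [← M.sum_Q_mul_noisyCopy x y haY (hd.obs_eq ▸ ha), Px_eq_sum_agreeing, hd.obs_eq]
  refine sum_nbij' (unpairAt b) (fun v => update v b (Nat.pair (v b) c)) ?_ ?_ ?_ ?_ ?_
  · intro v hv
    have hvb := hpair v hv
    simp only [agreeing, mem_filter] at hv ⊢
    obtain ⟨hv, hvX, hvY⟩ := hv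
    refine ⟨((M.mem_obsAssign_addNoisyCopy_iff hd).1 hv).2, fun i hi => ?_, fun i hi => ?_⟩
    · rw [unpairAt_of_ne (ne_of_mem_of_not_mem hi hbX), hvX i hi]
    · by_cases hib : i = b
      · subst hib; simp [unpairAt, hvb]
      · simpa [unpairAt_of_ne hib, hib] using hvY i hi
  · intro v hv
    simp only [agreeing, mem_filter] at hv ⊢
    obtain ⟨hv, hvX, hvY⟩ := hv
    refine ⟨(M.mem_obsAssign_addNoisyCopy_iff hd).2 ⟨by simpa, by simpa⟩, fun i hi => ?_,
      fun i hi => ?_⟩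
    · rw [update_of_ne (ne_of_mem_of_not_mem hi hbX), hvX i hi]
    · by_cases hib : i = b
      · subst hib; simp [hvY _ hi]
      · simpa [hib] using hvY i hi
  · intro v hv
    have hvb := hpair v hv
    conv_rhs => rw [← update_eq_self b v]
    simp [unpairAt, hvb]
  · intro v _
    simp
  · intro v hv
    have hvb := hpair v hv
    have hv2 := ((M.mem_obsAssign_addNoisyCopy_iff hd).1 (mem_filter.1 hv).1).1
    rw [Q_addNoisyCopy hd M ha _ hv2, if_pos (mem_sdiff.2 ⟨hd.target_mem_obs, hbX⟩), hvb,
      Nat.unpair_pair, unpairAt_of_ne hd.ne]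

end SEM

namespace IsEdgeDeletion

open SEM

variable {G G' : CausalGraph ν} {a b : ν}

theorem gIdentifiable_of_gIdentifiable_erase (hd : G'.IsEdgeDeletion G a b) (ha : a ∈ G.obs)
    {𝔸 : Finset (Finset ν)} {X Y : Finset ν} (haY : a ∈ Y) (hbY : b ∈ Y) (hbX : b ∉ X)
    (h : G.GIdentifiable 𝔸 X (Y.erase a)) : G'.GIdentifiable 𝔸 X Y := by
  intro M₁ M₂ hM₁ hM₂ hdom hQ x y hx hy
  have ha' : a ∈ G'.obs := hd.obs_eq ▸ ha
  have hda : M₁.dom a = M₂.dom a := hdom a ha'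
  have hmix : ∀ c ∈ M₁.dom a,
      M₁.Px X x Y (update y a c) / 2 + M₁.Px X x (Y.erase a) y / (2 * #(M₁.dom a)) =
        M₂.Px X x Y (update y a c) / 2 + M₂.Px X x (Y.erase a) y / (2 * #(M₁.dom a)) := by
    intro c hc
    have hx' : ∀ i ∈ X, x i ∈ (M₁.addNoisyCopy hd).dom i := fun i hi => by
      rw [addNoisyCopy_dom_of_ne hd M₁ (ne_of_mem_of_not_mem hi hbX)]
      exact hx i hi
    have hy' : ∀ i ∈ Y.erase a,
        update y b (Nat.pair (y b) c) i ∈ (M₁.addNoisyCopy hd).dom i := by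
      intro i hi
      by_cases hib : i = b
      · subst hib
        rw [update_self]
        exact pair_mem_addNoisyCopy_dom hd M₁ (hy _ hbY) hc
      · rw [update_of_ne hib, addNoisyCopy_dom_of_ne hd M₁ hib]
        exact hy i (mem_of_mem_erase hi)
    have hN := h _ _ (positive_addNoisyCopy hd M₁ ha hM₁)
      (positive_addNoisyCopy hd M₂ ha hM₂) (addNoisyCopy_dom_eq ha hdom)
      (fun A hA => Q_addNoisyCopy_eq_of_Q_eq ha hdom (hQ A hA)) x _ hx' hy'
    rwa [Px_addNoisyCopy hd M₁ ha haY hbY hbX x y hc,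
      Px_addNoisyCopy hd M₂ ha haY hbY hbX x y (hda ▸ hc), ← hda] at hN
  have hsum₂ := M₂.sum_Px_update (X := X) x y haY ha'
  rw [← hda] at hsum₂
  have hYeq := (eq_of_forall_half_add_mean_eq (M₁.dom_ne a) (M₁.sum_Px_update x y haY ha')
    hsum₂ hmix) (y a) (hy a haY)
  rwa [update_eq_self] at hYeq

end IsEdgeDeletion

end CausalGraph

theorem not_gid_erase_of_not_gid_delete_edge_general
    {ν : Type} [Fintype ν] [DecidableEq ν] (G G' : CausalGraph ν)
    (𝔸 : Finset (Finset ν))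
    (X Y : Finset ν) (hY : Y ⊆ G.obs) (hXY : Disjoint X Y)
    (Y₁ Y₂ : ν) (hY₁ : Y₁ ∈ Y) (hY₂ : Y₂ ∈ Y) (he : G.E Y₁ Y₂)
    (hobs : G'.obs = G.obs) (hunobs : G'.unobs = G.unobs)
    (hE : ∀ a b, G'.E a b ↔ (G.E a b ∧ ¬(a = Y₁ ∧ b = Y₂))) :
    ¬ G'.GIdentifiable 𝔸 X Y → ¬ G.GIdentifiable 𝔸 X (Y.erase Y₁) := fun hG' hG =>
  hG' ((CausalGraph.IsEdgeDeletion.mk hobs hunobs hE he).gIdentifiable_of_gIdentifiable_erase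
    (hY hY₁) hY₁ hY₂ (disjoint_right.1 hXY hY₂) hG)

/-- Lemma 9. If removing a directed edge `(Y₁, Y₂)` with
`Y₁, Y₂ ∈ Y` makes the causal effect of `X` on `Y` non-g-identifiable, then the causal
effect of `X` on `Y ∖ {Y₁}` is not g-identifiable from the original graph. -/
theorem not_gid_erase_of_not_gid_delete_edge
    {ν : Type} [Fintype ν] [DecidableEq ν] (G G' : CausalGraph ν)
    (𝔸 : Finset (Finset ν)) (h𝔸 : ∀ A ∈ 𝔸, A ⊆ G.obs)
    (X Y : Finset ν) (hX : X ⊆ G.obs) (hY : Y ⊆ G.obs) (hXY : Disjoint X Y)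
    (Y₁ Y₂ : ν) (hY₁ : Y₁ ∈ Y) (hY₂ : Y₂ ∈ Y) (he : G.E Y₁ Y₂)
    (hobs : G'.obs = G.obs) (hunobs : G'.unobs = G.unobs)
    (hE : ∀ a b, G'.E a b ↔ (G.E a b ∧ ¬(a = Y₁ ∧ b = Y₂))) :
    ¬ G'.GIdentifiable 𝔸 X Y → ¬ G.GIdentifiable 𝔸 X (Y.erase Y₁) :=
  not_gid_erase_of_not_gid_delete_edge_general G G' 𝔸 X Y hY hXY Y₁ Y₂ hY₁ hY₂ he hobs hunobs hE
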